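/- For a biquandle (X, ▷̲, ▷̄) and abelian group A, the composition ∂_2 ∘ ∂_3 = 0 on generators: for all (x, y, z) ∈ X³, ∂_2(∂_3(x,y,z)) = 0 in C_1(X;A), where the boundary maps are as defined in biquandle homology. The proof uses the three exchange laws and the first biquandle axiom. -/
import Mathlib


/-- A biquandle: a set with two operations `ud` (x ▷̲ y) and `uo` (x ▷̄ y)
satisfying the biquandle axioms. -/
structure Biquandle (X : Type*) where
  ud : X → X → X
  uo : X → X → X
  diag : ∀ x, uo x x = ud x x
  uo_bij : ∀ y, Function.Bijective fun x => uo x y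
  ud_bij : ∀ y, Function.Bijective fun x => ud x y
  S_bij : Function.Bijective fun p : X × X => (uo p.2 p.1, ud p.1 p.2)
  ex1 : ∀ x y z, uo (uo z y) (uo x y) = uo (uo z x) (ud y x)
  ex2 : ∀ x y z, ud (uo x y) (uo z y) = uo (ud x z) (ud y z)
  ex3 : ∀ x y z, ud (ud y x) (uo z x) = ud (ud y z) (ud x z)

/-- The set of parity triples (a,b,c) for the mixed exchange laws,
with `false` = even (0) and `true` = odd (1). -/
def parityTriples : Set (Bool × Bool × Bool) :=
  {(false, true, true), (true, false, true), (true, true, false)}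

/-- A parity biquandle: a set with four operations `ud e`, `uo e` (e = false for even,
e = true for odd) such that the even part is a biquandle, the odd operations satisfy
the invertibility conditions, and the mixed exchange laws hold. -/
structure ParityBiquandle (X : Type*) where
  ud : Bool → X → X → X
  uo : Bool → X → X → X
  even_diag : ∀ x, uo false x x = ud false x x
  uo_bij : ∀ e y, Function.Bijective fun x => uo e x y
  ud_bij : ∀ e y, Function.Bijective fun x => ud e x y
  S_bij : ∀ e, Function.Bijective fun p : X × X => (uo e p.2 p.1, ud e p.1 p.2)
  ex1 : ∀ a b c : Bool, (a, b, c) ∈ insert (false, false, false) parityTriples →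
    ∀ x y z, uo b (uo a z y) (uo c x y) = uo a (uo b z x) (ud c y x)
  ex2 : ∀ a b c : Bool, (a, b, c) ∈ insert (false, false, false) parityTriples →
    ∀ x y z, ud b (uo a x y) (uo c z y) = uo a (ud b x z) (ud c y z)
  ex3 : ∀ a b c : Bool, (a, b, c) ∈ insert (false, false, false) parityTriples →
    ∀ x y z, ud b (ud a y x) (uo c z x) = ud a (ud b y z) (ud c x z)

/-- The boundary map ∂₂ : C₂(X;A) → C₁(X;A) of biquandle homology:
∂₂(x₁,x₂) = -((x₂) - (x₂ ▷̄ x₁)) + ((x₁) - (x₁ ▷̲ x₂)). -/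
noncomputable def bqD2 {X : Type*} {A : Type*} [CommRing A] (B : Biquandle X)
    (f : (X × X) →₀ A) : X →₀ A :=
  f.sum fun p a => a •
    (-(Finsupp.single p.2 (1 : A) - Finsupp.single (B.uo p.2 p.1) 1) +
      (Finsupp.single p.1 1 - Finsupp.single (B.ud p.1 p.2) 1))

/-- The boundary map ∂₃ : C₃(X;A) → C₂(X;A) of biquandle homology:
∂₃(x,y,z) = -((y,z) - (y ▷̄ x, z ▷̄ x)) + ((x,z) - (x ▷̲ y, z ▷̄ y))
            - ((x,y) - (x ▷̲ z, y ▷̲ z)). -/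
noncomputable def bqD3 {X : Type*} {A : Type*} [CommRing A] (B : Biquandle X)
    (f : (X × X × X) →₀ A) : (X × X) →₀ A :=
  f.sum fun p a => a •
    (-(Finsupp.single (p.2.1, p.2.2) (1 : A) -
        Finsupp.single (B.uo p.2.1 p.1, B.uo p.2.2 p.1) 1) +
      (Finsupp.single (p.1, p.2.2) 1 -
        Finsupp.single (B.ud p.1 p.2.1, B.uo p.2.2 p.2.1) 1) -
      (Finsupp.single (p.1, p.2.1) 1 -
        Finsupp.single (B.ud p.1 p.2.2, B.ud p.2.1 p.2.2) 1))

/-- ∂₂ ∘ ∂₃ = 0 on generators of biquandle homology. -/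
theorem bqD2_comp_bqD3 {X : Type*} {A : Type*} [CommRing A] (B : Biquandle X)
    (x y z : X) :
    bqD2 B (bqD3 B (Finsupp.single (x, y, z) (1 : A))) = 0 := by
  have h : ∀ f : (X × X) →₀ A, bqD2 B f = Finsupp.linearCombination A
      (fun p : X × X => -(Finsupp.single p.2 (1 : A) - Finsupp.single (B.uo p.2 p.1) 1) +
        (Finsupp.single p.1 1 - Finsupp.single (B.ud p.1 p.2) 1)) f := fun f => rfl
  rw [bqD3, Finsupp.sum_single_index]
  · rw [h]
    simp only [one_smul, map_add, map_sub, map_neg, Finsupp.linearCombination_single]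
    rw [B.ex1 y x z, B.ex2 y x z, B.ex3 y x z]
    abel
  · simp
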